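/- Let W be a Coxeter group and * the Demazure product. For all v, w ∈ W: v*w = max{vy : y ≤ w and ℓ(vy) = ℓ(v) + ℓ(y)}, and v*w = vy where y is the maximal-length element with y ≤ w and ℓ(vy) = ℓ(v) + ℓ(y). -/

import Mathlib

/-- The strong Bruhat order: `u ≤ v` iff some reduced word for `v` has a subword
which is a word for `u`. -/
def bruhat {B W : Type*} [Group W] {M : CoxeterMatrix B} (cs : CoxeterSystem M W)
    (u v : W) : Prop :=
  ∃ ω : List B, cs.IsReduced ω ∧ cs.wordProd ω = v ∧
    ∃ ω' : List B, ω'.Sublist ω ∧ cs.wordProd ω' = u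

/-- `dem` is the Demazure (Hecke) product on the Coxeter group: it satisfies
`1 * u = u`, `s * u = max{u, su}` for simple reflections `s`, and is associative. -/
def IsDemazureProduct {B W : Type*} [Group W] {M : CoxeterMatrix B}
    (cs : CoxeterSystem M W) (dem : W → W → W) : Prop :=
  (∀ u : W, dem 1 u = u) ∧
  (∀ (i : B) (u : W),
    dem (cs.simple i) u =
      if cs.length u < cs.length (cs.simple i * u) then cs.simple i * u else u) ∧
  (∀ u v x : W, dem (dem u v) x = dem u (dem v x))

/-!
Induct on a reduced word `s v'` of `v`. If `y` is the optimal factor for `v'`, then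
`v * w = s * (v' * w) = s * (v' y)`. When `s` raises `v' y`, the same `y` is optimal for `s v'`.
When `s` lowers `v' y`, exchanging `s` into a reduced word of `v' y` can only delete a letter of
`y` (because `s` raises `v'`), so `y₁ = v'⁻¹ s v' y` lies below `y` and `s v' y₁ = v' y`.
Optimality has to be tracked in the Bruhat order, not merely by length; it is carried through the
induction by the lifting property `u ≤ x → s u ≤ x ∨ s u ≤ s x`.

The Bruhat order is taken as the chain order generated by `u < u t` (`t` a reflection,
`ℓ u < ℓ (u t)`), which agrees with the subword order by the strong exchange property. Exchange
comes from the action of `W` on `W × ZMod 2` in which `s_i` acts by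
`(t, e) ↦ (s_i t s_i, e + [t = s_i])`: a word acts by adding the parity of the number of
occurrences of `t` in its right inversion sequence, so this parity depends only on the product.
-/

namespace CoxeterSystem

open List

variable {B W : Type*} [Group W] {M : CoxeterMatrix B} (cs : CoxeterSystem M W)

local prefix:100 "σ" => cs.simple
local prefix:100 "π" => cs.wordProd
local prefix:100 "ℓ" => cs.length

section SignRepresentation

theorem simple_mul_pow_simple_mul_simple (i j : B) (k : ℕ) :
    σ j * (σ i * σ j) ^ k = ((σ i * σ j) ^ k)⁻¹ * σ j := by
  have hconj : σ j * (σ i * σ j) * (σ j)⁻¹ = (σ i * σ j)⁻¹ := by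
    simp [mul_assoc, inv_simple]
  rw [← inv_pow, ← hconj, conj_pow, inv_simple, mul_assoc, cs.simple_mul_simple_self, mul_one]

theorem simple_mul_mul_simple_eq_simple_iff (i : B) (t : W) :
    σ i * t * σ i = σ i ↔ t = σ i := by
  constructor
  · intro h
    simpa [mul_assoc] using congrArg (fun x => σ i * x * σ i) h
  · rintro rfl
    simp

theorem rightInvSeq_cons (i : B) (ω : List B) :
    cs.rightInvSeq (i :: ω) = ((π ω)⁻¹ * σ i * π ω) :: cs.rightInvSeq ω := rfl

theorem wordProd_alternatingWord_inv_mul_succ (i j : B) (n : ℕ) :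
    (π (alternatingWord i j n))⁻¹ * π (alternatingWord i j (n + 1)) =
      ((σ i * σ j) ^ n)⁻¹ * σ j := by
  rw [cs.prod_alternatingWord_eq_mul_pow, cs.prod_alternatingWord_eq_mul_pow]
  rcases Nat.even_or_odd' n with ⟨c, rfl | rfl⟩
  · have hn1 : ¬ Even (2 * c + 1) := by simp
    rw [if_pos (even_two_mul c), if_neg hn1, show (2 * c + 1) / 2 = c by omega,
      show 2 * c / 2 = c by omega, one_mul, simple_mul_pow_simple_mul_simple, ← mul_assoc,
      ← mul_inv_rev, ← pow_add, two_mul]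
  · have hn1 : ¬ Even (2 * c + 1) := by simp
    rw [if_neg hn1, if_pos (by simp [Nat.even_add_one]), one_mul,
      show (2 * c + 1 + 1) / 2 = c + 1 by omega, show (2 * c + 1) / 2 = c by omega,
      mul_inv_rev, inv_simple, mul_assoc, simple_mul_pow_simple_mul_simple, ← mul_assoc,
      ← mul_inv_rev, ← pow_add]
    ring_nf

theorem rightInvSeq_alternatingWord (i j : B) (n : ℕ) :
    cs.rightInvSeq (alternatingWord i j n) =
      (range n).reverse.map fun d => ((σ i * σ j) ^ d)⁻¹ * σ j := by
  induction n with
  | zero => simp [alternatingWord]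
  | succ n ih =>
    rw [range_succ, reverse_append, map_append, ← ih, alternatingWord_succ', rightInvSeq_cons]
    simp only [reverse_singleton, map_singleton, singleton_append, cons.injEq, and_true]
    rw [mul_assoc, ← wordProd_cons, ← alternatingWord_succ',
      wordProd_alternatingWord_inv_mul_succ]

variable [DecidableEq W]

theorem even_count_rightInvSeq_alternatingWord (i j : B) (t : W) :
    Even (count t (cs.rightInvSeq (alternatingWord i j (2 * M i j)))) := by
  have hperiod :
      ∀ d, ((σ i * σ j) ^ (M i j + d))⁻¹ * σ j = ((σ i * σ j) ^ d)⁻¹ * σ j := by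
    intro d
    rw [pow_add, cs.simple_mul_simple_pow, one_mul]
  rw [rightInvSeq_alternatingWord, map_reverse, count_reverse, two_mul, range_add, map_append,
    map_map]
  simp only [Function.comp_def, hperiod, count_append]
  exact ⟨_, rfl⟩

def signPerm (i : B) : Equiv.Perm (W × ZMod 2) :=
  Function.Involutive.toPerm (fun p => (σ i * p.1 * σ i, if p.1 = σ i then p.2 + 1 else p.2))
    (by
      rintro ⟨t, e⟩
      by_cases h : t = σ i
      · subst h
        simp only [simple_mul_mul_simple_eq_simple_iff, if_true, add_assoc]
        simp [show (1 + 1 : ZMod 2) = 0 from rfl]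
      · simp only [simple_mul_mul_simple_eq_simple_iff, h, if_false]
        simp [mul_assoc])

theorem signPerm_apply (i : B) (t : W) (e : ZMod 2) :
    cs.signPerm i (t, e) = (σ i * t * σ i, if t = σ i then e + 1 else e) := rfl

theorem prod_map_signPerm_apply (ω : List B) (t : W) (e : ZMod 2) :
    (ω.map cs.signPerm).prod (t, e) =
      (π ω * t * (π ω)⁻¹, e + (count t (cs.rightInvSeq ω) : ZMod 2)) := by
  induction ω with
  | nil => simp
  | cons i ω ih =>
    have hiff : π ω * t * (π ω)⁻¹ = σ i ↔ (π ω)⁻¹ * σ i * π ω = t := by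
      constructor <;> intro h <;> rw [← h] <;> group
    rw [map_cons, prod_cons, Equiv.Perm.mul_apply, ih, signPerm_apply, rightInvSeq_cons,
      count_cons, wordProd_cons]
    simp only [hiff, mul_inv_rev, inv_simple, beq_iff_eq]
    refine Prod.ext (by group) ?_
    split_ifs <;> push_cast <;> ring

theorem isLiftable_signPerm : M.IsLiftable cs.signPerm := by
  intro i j
  have hword : ∀ m : ℕ, (cs.signPerm i * cs.signPerm j) ^ m =
      ((alternatingWord i j (2 * m)).map cs.signPerm).prod := by
    intro m
    induction m with
    | zero => simp [alternatingWord]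
    | succ m ih =>
      rw [pow_succ', ih, show 2 * (m + 1) = 2 * m + 1 + 1 by ring, alternatingWord_succ',
        alternatingWord_succ']
      simp [mul_assoc]
  have hπ : π (alternatingWord i j (2 * M i j)) = 1 := by
    rw [cs.prod_alternatingWord_eq_mul_pow, if_pos (even_two_mul _), one_mul,
      Nat.mul_div_cancel_left _ two_pos, cs.simple_mul_simple_pow]
  ext ⟨t, e⟩
  · simp [hword, prod_map_signPerm_apply, hπ]
  · obtain ⟨c, hc⟩ := cs.even_count_rightInvSeq_alternatingWord i j t
    simp [hword, prod_map_signPerm_apply, hc, ← two_mul, show (2 : ZMod 2) = 0 from rfl]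

def signRep : W →* Equiv.Perm (W × ZMod 2) :=
  cs.lift ⟨cs.signPerm, cs.isLiftable_signPerm⟩

theorem signRep_simple (i : B) : cs.signRep (σ i) = cs.signPerm i :=
  cs.lift_apply_simple cs.isLiftable_signPerm i

theorem signRep_wordProd_apply (ω : List B) (t : W) (e : ZMod 2) :
    cs.signRep (π ω) (t, e) =
      (π ω * t * (π ω)⁻¹, e + (count t (cs.rightInvSeq ω) : ZMod 2)) := by
  rw [← prod_map_signPerm_apply, wordProd, map_list_prod, map_map]
  congr 3
  exact funext cs.signRep_simple

theorem signRep_apply (g u : W) (e : ZMod 2) :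
    cs.signRep g (u, e) = (g * u * g⁻¹, e + (cs.signRep g (u, 0)).2) := by
  obtain ⟨ω, rfl⟩ := cs.wordProd_surjective g
  simp [signRep_wordProd_apply]

theorem signRep_apply_self {t : W} (ht : cs.IsReflection t) :
    cs.signRep t (t, 0) = (t, 1) := by
  obtain ⟨x, i, rfl⟩ := ht
  set c := (cs.signRep x⁻¹ (x * σ i * x⁻¹, 0)).2
  have hback : cs.signRep x⁻¹ (x * σ i * x⁻¹, 0) = (σ i, c) := by
    rw [signRep_apply]
    simp [c, mul_assoc]
  have hforth : cs.signRep x (σ i, c) = (x * σ i * x⁻¹, 0) := by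
    rw [← hback, ← Equiv.Perm.mul_apply, ← map_mul, mul_inv_cancel, map_one,
      Equiv.Perm.one_apply]
  have hsimple : cs.signRep (σ i) (σ i, c) = (σ i, c + 1) := by
    simp [signRep_simple, signPerm_apply]
  rw [signRep_apply] at hforth
  rw [map_mul, map_mul, Equiv.Perm.mul_apply, Equiv.Perm.mul_apply, hback, hsimple,
    signRep_apply, Prod.mk.injEq]
  refine ⟨rfl, ?_⟩
  linear_combination (Prod.mk.inj hforth).2

end SignRepresentation

theorem mem_rightInvSeq_of_length_mul_lt {ζ : List B} {t : W} (ht : cs.IsReflection t)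
    (hlt : ℓ (π ζ * t) < ℓ (π ζ)) : t ∈ cs.rightInvSeq ζ := by
  classical
  obtain ⟨ρ, hρ, hρζ⟩ := cs.exists_isReduced (π ζ * t)
  have hζρ : π ζ = π ρ * t := by rw [← hρζ, mul_assoc, ht.mul_self, mul_one]
  have hρt : t ∉ cs.rightInvSeq ρ := fun hmem => by
    have := (cs.isRightInversion_of_mem_rightInvSeq hρ hmem).2
    rw [← hζρ, ← hρζ] at this
    exact lt_asymm this hlt
  have hodd : (count t (cs.rightInvSeq ζ) : ZMod 2) = 1 := by
    have h := congrArg (fun g => (cs.signRep g (t, 0)).2) hζρ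
    simpa [signRep_wordProd_apply, Equiv.Perm.mul_apply, signRep_apply_self cs ht,
      count_eq_zero_of_not_mem hρt] using h
  rw [← count_pos_iff, Nat.pos_iff_ne_zero]
  rintro h0
  simp [h0] at hodd

theorem strong_exchange {ζ : List B} {t : W} (ht : cs.IsReflection t)
    (hlt : ℓ (π ζ * t) < ℓ (π ζ)) : ∃ j < ζ.length, π ζ * t = π (ζ.eraseIdx j) := by
  obtain ⟨j, hj, hjt⟩ := mem_iff_getElem.mp (cs.mem_rightInvSeq_of_length_mul_lt ht hlt)
  rw [length_rightInvSeq] at hj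
  refine ⟨j, hj, ?_⟩
  rw [← wordProd_mul_getD_rightInvSeq, getD_eq_getElem _ _ (by simpa using hj), hjt]

theorem strong_exchange_left {ζ : List B} {t : W} (ht : cs.IsReflection t)
    (hlt : ℓ (t * π ζ) < ℓ (π ζ)) : ∃ j < ζ.length, t * π ζ = π (ζ.eraseIdx j) := by
  have hconj : t * π ζ = π ζ * ((π ζ)⁻¹ * t * (π ζ)⁻¹⁻¹) := by group
  rw [hconj] at hlt ⊢
  exact cs.strong_exchange (ht.conj _) hlt

theorem length_wordProd_eraseIdx_lt {ζ : List B} {j : ℕ} (hj : j < ζ.length) :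
    ℓ (π (ζ.eraseIdx j)) < ζ.length :=
  (cs.length_wordProd_le _).trans_lt (by rw [length_eraseIdx_of_lt hj]; omega)

def BruhatLE : W → W → Prop :=
  Relation.ReflTransGen fun u v => ∃ t, cs.IsReflection t ∧ v = u * t ∧ ℓ u < ℓ v

variable {cs}

theorem IsReduced.of_cons {i : B} {ω : List B} (h : cs.IsReduced (i :: ω)) :
    cs.IsReduced ω := by
  simpa using h.drop 1

theorem IsReduced.length_lt_simple_mul {i : B} {ω : List B} (h : cs.IsReduced (i :: ω)) :
    ℓ (π ω) < ℓ (σ i * π ω) := by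
  rw [← wordProd_cons, h.eq, h.of_cons.eq, length_cons]
  omega

theorem BruhatLE.refl (u : W) : cs.BruhatLE u u := Relation.ReflTransGen.refl

theorem BruhatLE.trans {u v w : W} (huv : cs.BruhatLE u v) (hvw : cs.BruhatLE v w) :
    cs.BruhatLE u w :=
  Relation.ReflTransGen.trans huv hvw

theorem BruhatLE.length_le {u v : W} (h : cs.BruhatLE u v) : ℓ u ≤ ℓ v := by
  induction h with
  | refl => exact le_rfl
  | tail _ step ih =>
    obtain ⟨_, _, _, hlt⟩ := step
    omega

theorem bruhatLE_mul_of_length_lt {u t : W} (ht : cs.IsReflection t)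
    (hlt : ℓ u < ℓ (u * t)) : cs.BruhatLE u (u * t) :=
  Relation.ReflTransGen.single ⟨t, ht, rfl, hlt⟩

theorem bruhatLE_mul_left_of_length_lt {u t : W} (ht : cs.IsReflection t)
    (hlt : ℓ u < ℓ (t * u)) : cs.BruhatLE u (t * u) := by
  have hconj : t * u = u * (u⁻¹ * t * u⁻¹⁻¹) := by group
  rw [hconj] at hlt ⊢
  exact bruhatLE_mul_of_length_lt (ht.conj _) hlt

theorem simple_mul_bruhatLE_of_length_lt {v : W} {i : B} (hv : ℓ (σ i * v) < ℓ v) :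
    cs.BruhatLE (σ i * v) v := by
  simpa [← mul_assoc] using bruhatLE_mul_left_of_length_lt (cs.isReflection_simple i)
    (u := σ i * v) (by rwa [cs.simple_mul_simple_cancel_left])

theorem simple_mul_bruhatLE_or_of_length_lt {u t : W} (ht : cs.IsReflection t)
    (hlt : ℓ u < ℓ (u * t)) (i : B) :
    cs.BruhatLE (σ i * u) (u * t) ∨ cs.BruhatLE (σ i * u) (σ i * (u * t)) := by
  rcases lt_or_gt_of_ne (ht.length_mul_left_ne (σ i * u)) with h | h
  · -- `σ i` lowers `u t` but not `u`; exchanging `t` into a reduced word `i :: ζ` of `u t`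
    -- must then delete the leading letter, so `σ i * u = u t`.
    left
    rw [mul_assoc] at h
    set w := u * t
    have hwt : w * t = u := by rw [mul_assoc, ht.mul_self, mul_one]
    obtain ⟨ζ, hζ, hζw⟩ := cs.exists_isReduced (σ i * w)
    have hiζ : π (i :: ζ) = w := by rw [wordProd_cons, ← hζw, simple_mul_simple_cancel_left]
    obtain ⟨j, hj, hju⟩ := cs.strong_exchange (ζ := i :: ζ) ht (by rw [hiζ, hwt]; omega)
    rw [hiζ, hwt] at hju
    cases j with
    | zero =>
      rw [hju, eraseIdx_cons_zero, ← hζw, cs.simple_mul_simple_cancel_left]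
      exact BruhatLE.refl w
    | succ j =>
      have hσu : σ i * u = π (ζ.eraseIdx j) := by
        rw [hju, eraseIdx_cons_succ, wordProd_cons, simple_mul_simple_cancel_left]
      have := cs.length_wordProd_eraseIdx_lt (Nat.lt_of_succ_lt_succ hj)
      rw [← hσu, ← hζ.eq, ← hζw] at this
      omega
  · right
    rw [← mul_assoc]
    exact bruhatLE_mul_of_length_lt ht h

theorem BruhatLE.simple_mul_bruhatLE_or {u v : W} (h : cs.BruhatLE u v) (i : B) :
    cs.BruhatLE (σ i * u) v ∨ cs.BruhatLE (σ i * u) (σ i * v) := by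
  induction h with
  | refl => exact Or.inr (BruhatLE.refl _)
  | tail _ step ih =>
    obtain ⟨t, ht, rfl, hlt⟩ := step
    rcases ih with h | h
    · exact Or.inl (h.trans (bruhatLE_mul_of_length_lt ht hlt))
    · exact (simple_mul_bruhatLE_or_of_length_lt ht hlt i).imp h.trans h.trans

theorem BruhatLE.simple_mul_of_length_lt {u v : W} (h : cs.BruhatLE u v) {i : B}
    (hv : ℓ v < ℓ (σ i * v)) : cs.BruhatLE (σ i * u) (σ i * v) :=
  (h.simple_mul_bruhatLE_or i).elim
    (fun h' => h'.trans (bruhatLE_mul_left_of_length_lt (cs.isReflection_simple i) hv)) id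

theorem BruhatLE.simple_mul_of_length_gt {u v : W} (h : cs.BruhatLE u v) {i : B}
    (hv : ℓ (σ i * v) < ℓ v) : cs.BruhatLE (σ i * u) v :=
  (h.simple_mul_bruhatLE_or i).elim id fun h' => h'.trans (simple_mul_bruhatLE_of_length_lt hv)

theorem bruhatLE_wordProd_of_sublist {ζ τ : List B} (hζ : cs.IsReduced ζ) (h : τ <+ ζ) :
    cs.BruhatLE (π τ) (π ζ) := by
  induction ζ generalizing τ with
  | nil => rw [sublist_nil.mp h]; exact BruhatLE.refl _
  | cons i ζ ih =>
    have hasc := hζ.length_lt_simple_mul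
    rw [wordProd_cons]
    rcases sublist_cons_iff.mp h with hτ | ⟨τ', rfl, hτ'⟩
    · exact (ih hζ.of_cons hτ).trans
        (bruhatLE_mul_left_of_length_lt (cs.isReflection_simple i) hasc)
    · rw [wordProd_cons]
      exact (ih hζ.of_cons hτ').simple_mul_of_length_lt hasc

theorem BruhatLE.exists_sublist {u w : W} (h : cs.BruhatLE u w) {ζ : List B}
    (hζ : π ζ = w) : ∃ τ, τ <+ ζ ∧ π τ = u := by
  induction h generalizing ζ with
  | refl => exact ⟨ζ, Sublist.refl ζ, hζ⟩
  | @tail v _ _ step ih =>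
    obtain ⟨t, ht, rfl, hlt⟩ := step
    have hζt : π ζ * t = v := by rw [hζ, mul_assoc, ht.mul_self, mul_one]
    obtain ⟨j, -, hj⟩ := cs.strong_exchange ht (by rwa [hζt, hζ])
    obtain ⟨τ, hτ, hτu⟩ := ih (hj.symm.trans hζt)
    exact ⟨τ, hτ.trans (eraseIdx_sublist ζ j), hτu⟩

theorem bruhat_iff_bruhatLE {u v : W} : bruhat cs u v ↔ cs.BruhatLE u v := by
  constructor
  · rintro ⟨ζ, hζ, rfl, τ, hτ, rfl⟩
    exact bruhatLE_wordProd_of_sublist hζ hτ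
  · intro h
    obtain ⟨ζ, hζ, rfl⟩ := cs.exists_isReduced v
    obtain ⟨τ, hτ, rfl⟩ := h.exists_sublist rfl
    exact ⟨ζ, hζ, rfl, τ, hτ, rfl⟩

variable (cs) in
def IsDemazureFactor (v w y : W) : Prop :=
  cs.BruhatLE y w ∧ ℓ (v * y) = ℓ v + ℓ y ∧
    ∀ y', cs.BruhatLE y' w → ℓ (v * y') = ℓ v + ℓ y' → cs.BruhatLE (v * y') (v * y)

theorem isDemazureFactor_one (w : W) : cs.IsDemazureFactor 1 w w :=
  ⟨BruhatLE.refl w, by simp, fun _ hy' _ => by simpa using hy'⟩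

theorem length_mul_eq_add_of_simple_mul {v y : W} {i : B} (hv : ℓ v < ℓ (σ i * v))
    (h : ℓ (σ i * v * y) = ℓ (σ i * v) + ℓ y) : ℓ (v * y) = ℓ v + ℓ y := by
  have := cs.length_mul_le v y
  have := cs.length_simple_mul v i
  have := cs.length_simple_mul (v * y) i
  rw [mul_assoc] at h
  omega

theorem length_inv_mul_simple_mul_mul_lt {v y : W} {i : B} (hv : ℓ v < ℓ (σ i * v))
    (hvy : ℓ (σ i * (v * y)) < ℓ (v * y)) : ℓ (v⁻¹ * σ i * v * y) < ℓ y := by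
  obtain ⟨ζ, hζ, rfl⟩ := cs.exists_isReduced v
  obtain ⟨ρ, hρ, rfl⟩ := cs.exists_isReduced y
  rw [← wordProd_append] at hvy
  obtain ⟨j, hj, hjeq⟩ := cs.strong_exchange_left (cs.isReflection_simple i) hvy
  rw [length_append] at hj
  rcases lt_or_ge j ζ.length with hjζ | hjζ
  · rw [eraseIdx_append_of_lt_length hjζ, wordProd_append, wordProd_append, ← mul_assoc,
      mul_left_inj] at hjeq
    have := cs.length_wordProd_eraseIdx_lt hjζ
    rw [← hjeq, ← hζ.eq] at this
    omega
  · rw [eraseIdx_append_of_length_le hjζ, wordProd_append, wordProd_append] at hjeq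
    have hy₁ : (π ζ)⁻¹ * σ i * π ζ * π ρ = π (ρ.eraseIdx (j - ζ.length)) := by
      rw [mul_assoc _ (π ζ), mul_assoc, hjeq, inv_mul_cancel_left]
    rw [hy₁, hρ.eq]
    exact cs.length_wordProd_eraseIdx_lt (by omega)

theorem IsDemazureFactor.simple_mul_of_length_lt {v w y : W} {i : B}
    (hy : cs.IsDemazureFactor v w y) (hv : ℓ v < ℓ (σ i * v))
    (hvy : ℓ (v * y) < ℓ (σ i * (v * y))) : cs.IsDemazureFactor (σ i * v) w y := by
  obtain ⟨hyw, hlen, hmax⟩ := hy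
  refine ⟨hyw, ?_, fun y' hy'w hy' => ?_⟩
  · have := cs.length_simple_mul v i
    have := cs.length_simple_mul (v * y) i
    rw [mul_assoc]
    omega
  · rw [mul_assoc, mul_assoc]
    exact (hmax y' hy'w (length_mul_eq_add_of_simple_mul hv hy')).simple_mul_of_length_lt hvy

theorem IsDemazureFactor.simple_mul_of_length_gt {v w y : W} {i : B}
    (hy : cs.IsDemazureFactor v w y) (hv : ℓ v < ℓ (σ i * v))
    (hvy : ℓ (σ i * (v * y)) < ℓ (v * y)) :
    cs.IsDemazureFactor (σ i * v) w (v⁻¹ * σ i * v * y) := by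
  obtain ⟨hyw, hlen, hmax⟩ := hy
  set y₁ := v⁻¹ * σ i * v * y
  have hvy₁ : σ i * v * y₁ = v * y := by simp [y₁, mul_assoc]
  have hy₁ : ℓ y₁ < ℓ y := length_inv_mul_simple_mul_mul_lt hv hvy
  have hy₁y : cs.BruhatLE y₁ y := by
    have hreflection : cs.IsReflection (v⁻¹ * σ i * v⁻¹⁻¹) :=
      (cs.isReflection_simple i).conj _
    have hyt : v⁻¹ * σ i * v⁻¹⁻¹ * y₁ = y := by simp [y₁, mul_assoc]
    rw [← hyt] at hy₁ ⊢
    exact bruhatLE_mul_left_of_length_lt hreflection hy₁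
  refine ⟨hy₁y.trans hyw, ?_, fun y' hy'w hy' => ?_⟩
  · have := cs.length_simple_mul v i
    have := cs.length_mul_le (σ i * v) y₁
    rw [hvy₁] at this ⊢
    omega
  · rw [hvy₁, mul_assoc]
    exact (hmax y' hy'w (length_mul_eq_add_of_simple_mul hv hy')).simple_mul_of_length_gt hvy

theorem exists_isDemazureFactor {dem : W → W → W} (hdem : IsDemazureProduct cs dem)
    (v w : W) : ∃ y, cs.IsDemazureFactor v w y ∧ dem v w = v * y := by
  obtain ⟨hone, hsimple, hassoc⟩ := hdem
  obtain ⟨ω, hω, rfl⟩ := cs.exists_isReduced v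
  induction ω with
  | nil => exact ⟨w, isDemazureFactor_one w, by simp [hone]⟩
  | cons i ω ih =>
    obtain ⟨y, hy, hdem⟩ := ih hω.of_cons
    have hasc := hω.length_lt_simple_mul
    have hdem_cons : dem (π (i :: ω)) w = dem (σ i) (π ω * y) := by
      rw [wordProd_cons, ← hdem, ← hassoc, hsimple, if_pos hasc]
    rw [hdem_cons, hsimple, wordProd_cons]
    split_ifs with hvy
    · exact ⟨y, hy.simple_mul_of_length_lt hasc hvy, by rw [mul_assoc]⟩
    · have hdesc : ℓ (σ i * (π ω * y)) < ℓ (π ω * y) :=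
        lt_of_le_of_ne (not_lt.mp hvy) (cs.length_simple_mul_ne _ i)
      exact ⟨_, hy.simple_mul_of_length_gt hasc hdesc, by simp [mul_assoc]⟩

end CoxeterSystem

/-- For all `v, w`: `v*w = max{vy : y ≤ w, ℓ(vy) = ℓ(v) + ℓ(y)}` (maximum w.r.t.
length, and achieved), and `v*w = vy` where `y` is the maximal-length element
with `y ≤ w` and `ℓ(vy) = ℓ(v) + ℓ(y)`. -/
theorem stmt4 {B W : Type*} [Group W] {M : CoxeterMatrix B} (cs : CoxeterSystem M W)
    (dem : W → W → W) (hdem : IsDemazureProduct cs dem) (v w : W) :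
    ∃ y : W, bruhat cs y w ∧
      cs.length (v * y) = cs.length v + cs.length y ∧
      dem v w = v * y ∧
      (∀ y' : W, bruhat cs y' w → cs.length (v * y') = cs.length v + cs.length y' →
        cs.length (v * y') ≤ cs.length (dem v w)) ∧
      (∀ y' : W, bruhat cs y' w → cs.length (v * y') = cs.length v + cs.length y' →
        cs.length y' ≤ cs.length y) := by
  obtain ⟨y, ⟨hyw, hlen, hmax⟩, hdem_eq⟩ := cs.exists_isDemazureFactor hdem v w
  have hmax_length : ∀ y', bruhat cs y' w → cs.length (v * y') = cs.length v + cs.length y' →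
      cs.length (v * y') ≤ cs.length (v * y) := fun y' hy' hadd =>
    (hmax y' (CoxeterSystem.bruhat_iff_bruhatLE.mp hy') hadd).length_le
  refine ⟨y, CoxeterSystem.bruhat_iff_bruhatLE.mpr hyw, hlen, hdem_eq,
    fun y' hy' hadd => hdem_eq ▸ hmax_length y' hy' hadd, fun y' hy' hadd => ?_⟩
  have := hmax_length y' hy' hadd
  omega
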